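/- For m > 5/2, the extended Hall operator satisfies ‖H̃(φ,ψ)‖_{V_{s,m}'} ≤ c ‖φ‖_{𝓗} ‖ψ‖_{𝓥} for all φ ∈ 𝓗 = H × H, ψ ∈ 𝓥 = V × V, and any s ≥ 0, where H̃((u¹,B¹),(u²,B²)) acts by ⟨H̃(φ,ψ), (v¹,v²)⟩ = h(B¹, B², v²). -/

import Mathlib

open MeasureTheory Filter
open scoped Topology FourierTransform

noncomputable section

abbrev Rd3 : Type := EuclideanSpace ℝ (Fin 3)
abbrev VF : Type := Rd3 → Fin 3 → ℝ

def pd (i : Fin 3) (f : Rd3 → ℝ) (x : Rd3) : ℝ :=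
  fderiv ℝ f x (EuclideanSpace.single i 1)

def divFree (u : VF) : Prop := ∀ x : Rd3, (∑ i : Fin 3, pd i (fun y => u y i) x) = 0

def dot3 (a b : Fin 3 → ℝ) : ℝ := ∑ j : Fin 3, a j * b j

def cross3 (a b : Fin 3 → ℝ) : Fin 3 → ℝ :=
  ![a 1 * b 2 - a 2 * b 1, a 2 * b 0 - a 0 * b 2, a 0 * b 1 - a 1 * b 0]

def curl3 (u : VF) (x : Rd3) : Fin 3 → ℝ :=
  ![pd 1 (fun y => u y 2) x - pd 2 (fun y => u y 1) x,
    pd 2 (fun y => u y 0) x - pd 0 (fun y => u y 2) x,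
    pd 0 (fun y => u y 1) x - pd 1 (fun y => u y 0) x]

def bForm (u w v : VF) : ℝ :=
  ∫ x : Rd3, ∑ i : Fin 3, ∑ j : Fin 3, u x i * pd i (fun y => w y j) x * v x j

def hallForm (u w v : VF) : ℝ :=
  - ∫ x : Rd3, dot3 (cross3 (u x) (curl3 w x)) (curl3 v x)

def hsSq (s : ℝ) (u : VF) : ℝ :=
  ∫ ξ : Rd3, (1 + ‖ξ‖ ^ 2) ^ s * ∑ j : Fin 3, ‖𝓕 (fun x : Rd3 => ((u x j : ℝ) : ℂ)) ξ‖ ^ 2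

def hsNorm (s : ℝ) (u : VF) : ℝ := Real.sqrt (hsSq s u)

def smoothCpt (u : VF) : Prop := ContDiff ℝ (⊤ : ℕ∞) u ∧ HasCompactSupport u

/-!
Pointwise, `|(B₁ × curl B₂) · curl v| ≤ |B₁| |curl B₂| |curl v|`. The factor `curl v` is bounded
uniformly by the `Hᵐ` norm of `v`: a Schwartz function is bounded by the `L¹` norm of its Fourier
transform, and by Cauchy–Schwarz `∫ |ξ| |v̂| ≤ (∫ (1 + |ξ|²)^(1-m))^(1/2) ‖v‖_{Hᵐ}`, where the
weight is integrable on `ℝ³` precisely because `2 (m - 1) > 3`. What is left, `∫ |B₁| |curl B₂|`,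
is at most `‖B₁‖_{L²} ‖curl B₂‖_{L²} ≲ ‖B₁‖_{L²} ‖B₂‖_{H¹}` by Cauchy–Schwarz and Plancherel.
Smooth compactly supported fields are Schwartz functions, so Fourier inversion and Plancherel
apply to their components.
-/

open SchwartzMap LineDeriv Real Matrix
open scoped SchwartzMap ContDiff ENNReal

theorem integral_mul_le_sqrt_mul_sqrt {α : Type*} [MeasurableSpace α] {μ : Measure α}
    {f g : α → ℝ} (hf0 : 0 ≤ᵐ[μ] f) (hg0 : 0 ≤ᵐ[μ] g) (hf : MemLp f 2 μ) (hg : MemLp g 2 μ) :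
    ∫ a, f a * g a ∂μ ≤ √(∫ a, f a ^ 2 ∂μ) * √(∫ a, g a ^ 2 ∂μ) := by
  have h := integral_mul_le_Lp_mul_Lq_of_nonneg Real.HolderConjugate.two_two hf0 hg0
    (by simpa using hf) (by simpa using hg)
  simpa [Real.sqrt_eq_rpow, one_div, Real.rpow_two] using h

theorem Real.rpow_div_two_sq {x : ℝ} (hx : 0 ≤ x) (t : ℝ) : (x ^ (t / 2)) ^ 2 = x ^ t := by
  rw [← Real.rpow_natCast, ← Real.rpow_mul hx]
  norm_num

namespace SchwartzMap

variable {V : Type*} [NormedAddCommGroup V] [InnerProductSpace ℝ V] [FiniteDimensional ℝ V]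
  [MeasurableSpace V] [BorelSpace V] {F : Type*} [NormedAddCommGroup F] [NormedSpace ℂ F]

theorem integrable_one_add_norm_sq_rpow_mul_norm_sq (φ : 𝓢(V, F)) (s : ℝ) :
    Integrable (fun ξ => (1 + ‖ξ‖ ^ 2) ^ s * ‖φ ξ‖ ^ 2) := by
  have hw := Function.hasTemperateGrowth_one_add_norm_sq_rpow V (s / 2)
  refine (((smulLeftCLM F (fun ξ : V => (1 + ‖ξ‖ ^ 2) ^ (s / 2)) φ).memLp 2).integrable_norm_pow
    two_ne_zero).congr (.of_forall fun ξ => ?_)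
  dsimp only
  rw [smulLeftCLM_apply_apply hw, norm_smul, mul_pow, Real.norm_of_nonneg (by positivity),
    Real.rpow_div_two_sq (by positivity)]

def sobolevSq (s : ℝ) (φ : 𝓢(V, F)) : ℝ := ∫ ξ, (1 + ‖ξ‖ ^ 2) ^ s * ‖𝓕 φ ξ‖ ^ 2

theorem sobolevSq_nonneg (s : ℝ) (φ : 𝓢(V, F)) : 0 ≤ sobolevSq s φ :=
  integral_nonneg fun ξ => by positivity

theorem norm_le_integral_norm_fourier [CompleteSpace F] (φ : 𝓢(V, F)) (x : V) :
    ‖φ x‖ ≤ ∫ ξ, ‖𝓕 φ ξ‖ := by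
  have h := norm_fourier_apply_le_toLp_one (𝓕 φ) (-x)
  rw [norm_toLp_one] at h
  calc ‖φ x‖ = ‖𝓕⁻ (𝓕 φ) x‖ := by rw [FourierTransform.fourierInv_fourier_eq]
    _ = ‖𝓕 (𝓕 φ) (-x)‖ := by rw [fourierInv_apply_eq]; rfl
    _ ≤ _ := h

theorem norm_sq_le_integral_mul_sobolevSq [CompleteSpace F] {s : ℝ}
    (hs : Module.finrank ℝ V < 2 * s) (φ : 𝓢(V, F)) (x : V) :
    ‖φ x‖ ^ 2 ≤ (∫ ξ : V, (1 + ‖ξ‖ ^ 2) ^ (-s)) * sobolevSq s φ := by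
  have hw (t : ℝ) : Continuous fun ξ : V => (1 + ‖ξ‖ ^ 2) ^ t :=
    (Function.hasTemperateGrowth_one_add_norm_sq_rpow V t).1.continuous
  have hdecay : MemLp (fun ξ : V => (1 + ‖ξ‖ ^ 2) ^ (-s / 2)) 2 := by
    refine (memLp_two_iff_integrable_sq (hw _).aestronglyMeasurable).2 ?_
    simp only [Real.rpow_div_two_sq (zero_lt_one_add_norm_sq _).le]
    have h := integrable_rpow_neg_one_add_norm_sq (μ := volume) hs
    rwa [show -(2 * s) / 2 = -s by ring] at h
  have hgrowth : MemLp (fun ξ => (1 + ‖ξ‖ ^ 2) ^ (s / 2) * ‖𝓕 φ ξ‖) 2 := by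
    refine (memLp_two_iff_integrable_sq
      ((hw _).mul (𝓕 φ).continuous.norm).aestronglyMeasurable).2 ?_
    simpa only [Pi.mul_apply, mul_pow, Real.rpow_div_two_sq (zero_lt_one_add_norm_sq _).le] using
      integrable_one_add_norm_sq_rpow_mul_norm_sq (𝓕 φ) s
  have h : ‖φ x‖ ≤ √(∫ ξ : V, (1 + ‖ξ‖ ^ 2) ^ (-s)) * √(sobolevSq s φ) := calc
    ‖φ x‖ ≤ ∫ ξ, ‖𝓕 φ ξ‖ := norm_le_integral_norm_fourier φ x
    _ = ∫ ξ, (1 + ‖ξ‖ ^ 2) ^ (-s / 2) * ((1 + ‖ξ‖ ^ 2) ^ (s / 2) * ‖𝓕 φ ξ‖) := by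
      congr 1 with ξ
      rw [← mul_assoc, ← Real.rpow_add (zero_lt_one_add_norm_sq _), neg_div, neg_add_cancel,
        Real.rpow_zero, one_mul]
    _ ≤ √(∫ ξ, ((1 + ‖ξ‖ ^ 2) ^ (-s / 2)) ^ 2) *
          √(∫ ξ, ((1 + ‖ξ‖ ^ 2) ^ (s / 2) * ‖𝓕 φ ξ‖) ^ 2) :=
      integral_mul_le_sqrt_mul_sqrt (.of_forall fun ξ => by positivity)
        (.of_forall fun ξ => by positivity) hdecay hgrowth
    _ = _ := by simp only [mul_pow, Real.rpow_div_two_sq (zero_lt_one_add_norm_sq _).le]; rfl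
  calc ‖φ x‖ ^ 2 ≤ (√(∫ ξ : V, (1 + ‖ξ‖ ^ 2) ^ (-s)) * √(sobolevSq s φ)) ^ 2 :=
        pow_le_pow_left₀ (norm_nonneg _) h 2
    _ = _ := by
      rw [mul_pow, Real.sq_sqrt (integral_nonneg fun ξ => by positivity),
        Real.sq_sqrt (sobolevSq_nonneg s φ)]

theorem norm_fourier_lineDerivOp (φ : 𝓢(V, F)) (v ξ : V) :
    ‖𝓕 (∂_{v} φ) ξ‖ = 2 * π * |inner ℝ ξ v| * ‖𝓕 φ ξ‖ := by
  have : (inner ℝ · v).HasTemperateGrowth := ((innerSL ℝ).flip v).hasTemperateGrowth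
  rw [fourier_lineDerivOp_eq]
  simp only [_root_.smul_apply, smulLeftCLM_apply_apply this, norm_smul, Real.norm_eq_abs]
  simp [abs_of_pos Real.pi_pos]
  ring

theorem sobolevSq_lineDerivOp_le (s : ℝ) (φ : 𝓢(V, F)) (v : V) :
    sobolevSq s (∂_{v} φ) ≤ (2 * π * ‖v‖) ^ 2 * sobolevSq (s + 1) φ := by
  rw [sobolevSq, sobolevSq, ← integral_const_mul]
  refine integral_mono (integrable_one_add_norm_sq_rpow_mul_norm_sq _ s)
    ((integrable_one_add_norm_sq_rpow_mul_norm_sq _ _).const_mul _) fun ξ => ?_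
  have hinner : |inner ℝ ξ v| ^ 2 ≤ (1 + ‖ξ‖ ^ 2) * ‖v‖ ^ 2 := calc
    |inner ℝ ξ v| ^ 2 ≤ (‖ξ‖ * ‖v‖) ^ 2 :=
      pow_le_pow_left₀ (abs_nonneg _) (abs_real_inner_le_norm ξ v) 2
    _ ≤ (1 + ‖ξ‖ ^ 2) * ‖v‖ ^ 2 := by rw [mul_pow]; gcongr; linarith
  dsimp only
  rw [norm_fourier_lineDerivOp, Real.rpow_add_one (zero_lt_one_add_norm_sq ξ).ne']
  calc (1 + ‖ξ‖ ^ 2) ^ s * (2 * π * |inner ℝ ξ v| * ‖𝓕 φ ξ‖) ^ 2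
      = (2 * π) ^ 2 * |inner ℝ ξ v| ^ 2 * ((1 + ‖ξ‖ ^ 2) ^ s * ‖𝓕 φ ξ‖ ^ 2) := by ring
    _ ≤ (2 * π) ^ 2 * ((1 + ‖ξ‖ ^ 2) * ‖v‖ ^ 2) * ((1 + ‖ξ‖ ^ 2) ^ s * ‖𝓕 φ ξ‖ ^ 2) := by
      gcongr
    _ = _ := by ring

theorem integral_norm_sq_eq_sobolevSq_zero {H : Type*} [NormedAddCommGroup H]
    [InnerProductSpace ℂ H] [CompleteSpace H] (φ : 𝓢(V, H)) :
    ∫ x, ‖φ x‖ ^ 2 = sobolevSq 0 φ := by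
  simp [sobolevSq, integral_norm_sq_fourier]

end SchwartzMap

section ComplexSchwartz

variable {V : Type*} [NormedAddCommGroup V] [NormedSpace ℝ V] {f : V → ℝ}

def HasCompactSupport.toComplexSchwartzMap (hc : HasCompactSupport f) (hf : ContDiff ℝ ∞ f) :
    𝓢(V, ℂ) :=
  HasCompactSupport.toSchwartzMap (f := fun x => (f x : ℂ)) (hc.comp_left Complex.ofReal_zero)
    (Complex.ofRealCLM.contDiff.comp hf)

theorem HasCompactSupport.lineDerivOp_toComplexSchwartzMap (hc : HasCompactSupport f)
    (hf : ContDiff ℝ ∞ f) (v x : V) : ∂_{v} (hc.toComplexSchwartzMap hf) x = fderiv ℝ f x v := by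
  change fderiv ℝ (Complex.ofRealCLM ∘ f) x v = _
  rw [(Complex.ofRealCLM.hasFDerivAt.comp x (hf.differentiable (by simp) x).hasFDerivAt).fderiv]
  rfl

end ComplexSchwartz

theorem dotProduct_self_nonneg {ι R : Type*} [Fintype ι] [CommRing R] [LinearOrder R]
    [IsStrictOrderedRing R] (v : ι → R) : 0 ≤ v ⬝ᵥ v :=
  Finset.sum_nonneg fun i _ => mul_self_nonneg (v i)

theorem sq_dotProduct_cross_le {R : Type*} [CommRing R] [LinearOrder R] [IsStrictOrderedRing R]
    (a b c : Fin 3 → R) : (a ⨯₃ b ⬝ᵥ c) ^ 2 ≤ a ⬝ᵥ a * (b ⬝ᵥ b) * (c ⬝ᵥ c) := by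
  calc (a ⨯₃ b ⬝ᵥ c) ^ 2 ≤ a ⨯₃ b ⬝ᵥ a ⨯₃ b * (c ⬝ᵥ c) := by
        simpa only [dotProduct, sq] using Finset.sum_mul_sq_le_sq_mul_sq Finset.univ (a ⨯₃ b) c
    _ = a ⬝ᵥ a * (b ⬝ᵥ b) * (c ⬝ᵥ c) - (a ⬝ᵥ b) ^ 2 * (c ⬝ᵥ c) := by
      rw [cross_dot_cross, dotProduct_comm b a]
      ring
    _ ≤ a ⬝ᵥ a * (b ⬝ᵥ b) * (c ⬝ᵥ c) :=
      sub_le_self _ (mul_nonneg (sq_nonneg _) (dotProduct_self_nonneg c))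

theorem abs_dotProduct_cross_le (a b c : Fin 3 → ℝ) :
    |a ⨯₃ b ⬝ᵥ c| ≤ √(a ⬝ᵥ a) * √(b ⬝ᵥ b) * √(c ⬝ᵥ c) := by
  rw [← Real.sqrt_mul (dotProduct_self_nonneg a),
    ← Real.sqrt_mul (mul_nonneg (dotProduct_self_nonneg a) (dotProduct_self_nonneg b))]
  exact Real.abs_le_sqrt (sq_dotProduct_cross_le a b c)

theorem continuous_pd {f : Rd3 → ℝ} (hf : ContDiff ℝ 1 f) (i : Fin 3) : Continuous (pd i f) :=
  (hf.continuous_fderiv one_ne_zero).clm_apply continuous_const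

theorem tsupport_pd_subset (i : Fin 3) (f : Rd3 → ℝ) : tsupport (pd i f) ⊆ tsupport f :=
  tsupport_fderiv_apply_subset ℝ _

theorem support_curl3_subset (u : VF) : Function.support (curl3 u) ⊆ tsupport u := by
  intro x hx
  by_contra hxu
  apply hx
  have hpd (i j : Fin 3) : pd i (fun y => u y j) x = 0 :=
    image_eq_zero_of_notMem_tsupport fun h =>
      hxu (tsupport_comp_subset (g := fun v : Fin 3 → ℝ => v j) rfl u (tsupport_pd_subset i _ h))
  ext k
  fin_cases k <;> simp [curl3, hpd]

theorem continuous_curl3 {u : VF} (hu : ContDiff ℝ 1 u) : Continuous (curl3 u) := by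
  have h (i j : Fin 3) : Continuous (pd i (fun y => u y j)) :=
    continuous_pd (contDiff_pi.mp hu j) i
  unfold curl3
  fun_prop

theorem curl3_dotProduct_self_le (u : VF) (x : Rd3) :
    curl3 u x ⬝ᵥ curl3 u x ≤ 2 * ∑ i, ∑ j, pd i (fun y => u y j) x ^ 2 := by
  simp only [curl3, dotProduct, Fin.sum_univ_three, Matrix.cons_val_zero, Matrix.cons_val_one,
    Matrix.cons_val_two, Matrix.head_cons, Matrix.tail_cons]
  set p : Fin 3 → Fin 3 → ℝ := fun i j => pd i (fun y => u y j) x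
  nlinarith [sq_nonneg (p 1 2 + p 2 1), sq_nonneg (p 2 0 + p 0 2), sq_nonneg (p 0 1 + p 1 0),
    sq_nonneg (p 0 0), sq_nonneg (p 1 1), sq_nonneg (p 2 2)]

theorem hsSq_nonneg (s : ℝ) (u : VF) : 0 ≤ hsSq s u :=
  integral_nonneg fun ξ => by positivity

section VectorField

variable {u : VF}

theorem contDiff_component (hu : ContDiff ℝ ∞ u) (j : Fin 3) :
    ContDiff ℝ ∞ (fun x => u x j) :=
  contDiff_pi.mp hu j

theorem HasCompactSupport.component (hc : HasCompactSupport u) (j : Fin 3) :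
    HasCompactSupport (fun x => u x j) :=
  hc.comp_left (g := fun v : Fin 3 → ℝ => v j) rfl

def componentSchwartz (hu : ContDiff ℝ ∞ u) (hc : HasCompactSupport u) (j : Fin 3) :
    𝓢(Rd3, ℂ) :=
  (hc.component j).toComplexSchwartzMap (contDiff_component hu j)

theorem hsSq_eq_sum_sobolevSq (s : ℝ) (hu : ContDiff ℝ ∞ u) (hc : HasCompactSupport u) :
    hsSq s u = ∑ j, sobolevSq s (componentSchwartz hu hc j) := by
  rw [hsSq]
  simp_rw [sobolevSq, Finset.mul_sum]
  exact integral_finsetSum _ fun j _ =>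
    integrable_one_add_norm_sq_rpow_mul_norm_sq (𝓕 (componentSchwartz hu hc j)) s

theorem sobolevSq_componentSchwartz_le_hsSq (s : ℝ) (hu : ContDiff ℝ ∞ u)
    (hc : HasCompactSupport u) (j : Fin 3) :
    sobolevSq s (componentSchwartz hu hc j) ≤ hsSq s u := by
  rw [hsSq_eq_sum_sobolevSq s hu hc]
  exact Finset.single_le_sum (fun k _ => sobolevSq_nonneg s _) (Finset.mem_univ j)

theorem integral_dotProduct_self_eq_hsSq_zero (hu : ContDiff ℝ ∞ u) (hc : HasCompactSupport u) :
    ∫ x, u x ⬝ᵥ u x = hsSq 0 u := by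
  have hsq (j : Fin 3) (x : Rd3) : u x j * u x j = ‖componentSchwartz hu hc j x‖ ^ 2 := by
    change u x j * u x j = ‖(u x j : ℂ)‖ ^ 2
    rw [Complex.norm_real, Real.norm_eq_abs, sq_abs, sq]
  simp_rw [dotProduct, hsq, hsSq_eq_sum_sobolevSq 0 hu hc, ← integral_norm_sq_eq_sobolevSq_zero]
  exact integral_finsetSum _ fun j _ =>
    ((componentSchwartz hu hc j).memLp 2).integrable_norm_pow two_ne_zero

theorem pd_sq_eq_norm_sq (hu : ContDiff ℝ ∞ u) (hc : HasCompactSupport u) (i j : Fin 3)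
    (x : Rd3) :
    pd i (fun y => u y j) x ^ 2 =
      ‖∂_{EuclideanSpace.single i (1 : ℝ)} (componentSchwartz hu hc j) x‖ ^ 2 := by
  rw [componentSchwartz, HasCompactSupport.lineDerivOp_toComplexSchwartzMap, Complex.norm_real,
    Real.norm_eq_abs, sq_abs]
  rfl

theorem sobolevSq_lineDerivOp_componentSchwartz_le (s : ℝ) (hu : ContDiff ℝ ∞ u)
    (hc : HasCompactSupport u) (i j : Fin 3) :
    sobolevSq s (∂_{EuclideanSpace.single i (1 : ℝ)} (componentSchwartz hu hc j)) ≤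
      4 * π ^ 2 * hsSq (s + 1) u := by
  refine (sobolevSq_lineDerivOp_le s _ _).trans ?_
  rw [PiLp.norm_single, norm_one, mul_one, mul_pow, show (2 : ℝ) ^ 2 = 4 by norm_num]
  gcongr
  exact sobolevSq_componentSchwartz_le_hsSq _ hu hc j

theorem integral_pd_sq_le (hu : ContDiff ℝ ∞ u) (hc : HasCompactSupport u) (i j : Fin 3) :
    ∫ x, pd i (fun y => u y j) x ^ 2 ≤ 4 * π ^ 2 * hsSq 1 u := by
  simp_rw [pd_sq_eq_norm_sq hu hc, integral_norm_sq_eq_sobolevSq_zero]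
  simpa using sobolevSq_lineDerivOp_componentSchwartz_le 0 hu hc i j

theorem pd_sq_le {m : ℝ} (hm : 5 / 2 < m) (hu : ContDiff ℝ ∞ u) (hc : HasCompactSupport u)
    (i j : Fin 3) (x : Rd3) :
    pd i (fun y => u y j) x ^ 2 ≤
      4 * π ^ 2 * (∫ ξ : Rd3, (1 + ‖ξ‖ ^ 2) ^ (-(m - 1))) * hsSq m u := by
  have hdim : (Module.finrank ℝ Rd3 : ℝ) < 2 * (m - 1) := by simp; linarith
  have hderiv := sobolevSq_lineDerivOp_componentSchwartz_le (m - 1) hu hc i j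
  rw [sub_add_cancel] at hderiv
  rw [pd_sq_eq_norm_sq hu hc]
  calc _ ≤ (∫ ξ : Rd3, (1 + ‖ξ‖ ^ 2) ^ (-(m - 1))) *
        sobolevSq (m - 1) (∂_{EuclideanSpace.single i (1 : ℝ)} (componentSchwartz hu hc j)) :=
      norm_sq_le_integral_mul_sobolevSq hdim _ x
    _ ≤ (∫ ξ : Rd3, (1 + ‖ξ‖ ^ 2) ^ (-(m - 1))) * (4 * π ^ 2 * hsSq m u) := by
      gcongr
    _ = _ := by ring

theorem integral_curl3_dotProduct_self_le (hu : ContDiff ℝ ∞ u) (hc : HasCompactSupport u) :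
    ∫ x, curl3 u x ⬝ᵥ curl3 u x ≤ 72 * π ^ 2 * hsSq 1 u := by
  have hpd (i j : Fin 3) : Integrable fun x => pd i (fun y => u y j) x ^ 2 := by
    simp_rw [pd_sq_eq_norm_sq hu hc]
    exact (SchwartzMap.memLp (∂_{EuclideanSpace.single i (1 : ℝ)} (componentSchwartz hu hc j))
      2).integrable_norm_pow two_ne_zero
  have hcurl := continuous_curl3 (hu.of_le (by simp))
  calc ∫ x, curl3 u x ⬝ᵥ curl3 u x
      ≤ ∫ x, 2 * ∑ i, ∑ j, pd i (fun y => u y j) x ^ 2 :=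
        integral_mono ((hcurl.dotProduct hcurl).integrable_of_hasCompactSupport
          ((hc.mono' (support_curl3_subset u)).comp_left (g := fun v => v ⬝ᵥ v)
            (zero_dotProduct 0)))
          ((integrable_finsetSum _ fun i _ =>
            integrable_finsetSum _ fun j _ => hpd i j).const_mul 2)
          (curl3_dotProduct_self_le u)
    _ = 2 * ∑ i, ∑ j, ∫ x, pd i (fun y => u y j) x ^ 2 := by
        rw [integral_const_mul, integral_finsetSum _ fun i _ =>
          integrable_finsetSum _ fun j _ => hpd i j]
        simp_rw [integral_finsetSum _ fun j _ => hpd _ j]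
    _ ≤ 2 * ∑ i : Fin 3, ∑ j : Fin 3, 4 * π ^ 2 * hsSq 1 u := by
        gcongr with i _ j _
        exact integral_pd_sq_le hu hc i j
    _ = 72 * π ^ 2 * hsSq 1 u := by simp; ring

theorem curl3_dotProduct_self_le_hsSq {m : ℝ} (hm : 5 / 2 < m) (hu : ContDiff ℝ ∞ u)
    (hc : HasCompactSupport u) (x : Rd3) :
    curl3 u x ⬝ᵥ curl3 u x ≤
      72 * π ^ 2 * (∫ ξ : Rd3, (1 + ‖ξ‖ ^ 2) ^ (-(m - 1))) * hsSq m u := calc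
  _ ≤ 2 * ∑ i, ∑ j, pd i (fun y => u y j) x ^ 2 := curl3_dotProduct_self_le u x
  _ ≤ 2 * ∑ i : Fin 3, ∑ j : Fin 3,
        4 * π ^ 2 * (∫ ξ : Rd3, (1 + ‖ξ‖ ^ 2) ^ (-(m - 1))) * hsSq m u := by
      gcongr with i _ j _
      exact pd_sq_le hm hu hc i j x
  _ = _ := by simp; ring

end VectorField

theorem Continuous.memLp_sqrt_dotProduct_self {X ι : Type*} [TopologicalSpace X]
    [MeasurableSpace X] [OpensMeasurableSpace X] {μ : Measure X} [IsFiniteMeasureOnCompacts μ]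
    [Fintype ι] {w : X → ι → ℝ} (hw : Continuous w) (hwc : HasCompactSupport w) (p : ℝ≥0∞) :
    MemLp (fun x => √(w x ⬝ᵥ w x)) p μ :=
  (hw.dotProduct hw).sqrt.memLp_of_hasCompactSupport
    (hwc.comp_left (g := fun a => √(a ⬝ᵥ a)) (by simp))

theorem abs_hallForm_le {m : ℝ} (hm : 5 / 2 < m) {B₁ B₂ v : VF}
    (hB₁ : ContDiff ℝ ∞ B₁) (hB₁c : HasCompactSupport B₁)
    (hB₂ : ContDiff ℝ ∞ B₂) (hB₂c : HasCompactSupport B₂)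
    (hv : ContDiff ℝ ∞ v) (hvc : HasCompactSupport v) :
    |hallForm B₁ B₂ v| ≤ 72 * π ^ 2 * √(∫ ξ : Rd3, (1 + ‖ξ‖ ^ 2) ^ (-(m - 1))) *
      √(hsSq 0 B₁) * √(hsSq 1 B₂) * √(hsSq m v) := by
  set K := ∫ ξ : Rd3, (1 + ‖ξ‖ ^ 2) ^ (-(m - 1))
  set M := √(72 * π ^ 2 * K * hsSq m v)
  have hB₁L2 := hB₁.continuous.memLp_sqrt_dotProduct_self hB₁c 2 (μ := volume)
  have hcurlL2 := (continuous_curl3 (hB₂.of_le (by simp))).memLp_sqrt_dotProduct_self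
    (hB₂c.mono' (support_curl3_subset B₂)) 2 (μ := volume)
  have hpointwise (x : Rd3) : ‖B₁ x ⨯₃ curl3 B₂ x ⬝ᵥ curl3 v x‖ ≤
      M * (√(B₁ x ⬝ᵥ B₁ x) * √(curl3 B₂ x ⬝ᵥ curl3 B₂ x)) := by
    rw [Real.norm_eq_abs, mul_comm M]
    refine (abs_dotProduct_cross_le _ _ _).trans ?_
    gcongr
    exact Real.sqrt_le_sqrt (curl3_dotProduct_self_le_hsSq hm hv hvc x)
  calc |hallForm B₁ B₂ v| = ‖∫ x, B₁ x ⨯₃ curl3 B₂ x ⬝ᵥ curl3 v x‖ := by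
        rw [hallForm, abs_neg, Real.norm_eq_abs]
        rfl -- `dot3` and `cross3` unfold to `⬝ᵥ` and `⨯₃`
    _ ≤ ∫ x, M * (√(B₁ x ⬝ᵥ B₁ x) * √(curl3 B₂ x ⬝ᵥ curl3 B₂ x)) :=
        norm_integral_le_of_norm_le ((hB₁L2.integrable_mul hcurlL2).const_mul M)
          (.of_forall hpointwise)
    _ = M * ∫ x, √(B₁ x ⬝ᵥ B₁ x) * √(curl3 B₂ x ⬝ᵥ curl3 B₂ x) := integral_const_mul M _
    _ ≤ M * (√(∫ x, √(B₁ x ⬝ᵥ B₁ x) ^ 2) * √(∫ x, √(curl3 B₂ x ⬝ᵥ curl3 B₂ x) ^ 2)) := by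
        gcongr
        exact integral_mul_le_sqrt_mul_sqrt (.of_forall fun x => Real.sqrt_nonneg _)
          (.of_forall fun x => Real.sqrt_nonneg _) hB₁L2 hcurlL2
    _ ≤ M * (√(hsSq 0 B₁) * √(72 * π ^ 2 * hsSq 1 B₂)) := by
        simp only [Real.sq_sqrt (dotProduct_self_nonneg _)]
        rw [integral_dotProduct_self_eq_hsSq_zero hB₁ hB₁c]
        gcongr
        exact integral_curl3_dotProduct_self_le hB₂ hB₂c
    _ = √(72 * π ^ 2) * √(72 * π ^ 2) * √K * √(hsSq 0 B₁) * √(hsSq 1 B₂) * √(hsSq m v) := by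
        have hK : 0 ≤ K := integral_nonneg fun ξ => by positivity
        simp only [M, Real.sqrt_mul (by positivity : (0 : ℝ) ≤ 72 * π ^ 2),
          Real.sqrt_mul (by positivity : (0 : ℝ) ≤ 72 * π ^ 2 * K)]
        ring
    _ = _ := by rw [Real.mul_self_sqrt (by positivity)]

theorem hallOperator_product_bound_general (s m : ℝ) (hm : 5 / 2 < m) :
    ∃ c : ℝ, 0 < c ∧ ∀ u1 B1 u2 B2 v1 v2 : VF,
      (ContDiff ℝ (⊤ : ℕ∞) u1 ∧ HasCompactSupport u1 ∧ divFree u1) →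
      (ContDiff ℝ (⊤ : ℕ∞) B1 ∧ HasCompactSupport B1 ∧ divFree B1) →
      (ContDiff ℝ (⊤ : ℕ∞) u2 ∧ HasCompactSupport u2 ∧ divFree u2) →
      (ContDiff ℝ (⊤ : ℕ∞) B2 ∧ HasCompactSupport B2 ∧ divFree B2) →
      (ContDiff ℝ (⊤ : ℕ∞) v1 ∧ HasCompactSupport v1 ∧ divFree v1) →
      (ContDiff ℝ (⊤ : ℕ∞) v2 ∧ HasCompactSupport v2 ∧ divFree v2) →
      |hallForm B1 B2 v2| ≤
        c * Real.sqrt (hsSq 0 u1 + hsSq 0 B1) * Real.sqrt (hsSq 1 u2 + hsSq 1 B2) *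
          Real.sqrt (hsSq s v1 + hsSq m v2) := by
  set C := 72 * π ^ 2 * √(∫ ξ : Rd3, (1 + ‖ξ‖ ^ 2) ^ (-(m - 1)))
  refine ⟨C + 1, by positivity, ?_⟩
  rintro u1 B1 u2 B2 v1 v2 - ⟨hB1, hB1c, -⟩ - ⟨hB2, hB2c, -⟩ - ⟨hv2, hv2c, -⟩
  calc |hallForm B1 B2 v2|
      ≤ C * √(hsSq 0 B1) * √(hsSq 1 B2) * √(hsSq m v2) :=
        abs_hallForm_le hm hB1 hB1c hB2 hB2c hv2 hv2c
    _ ≤ (C + 1) * √(hsSq 0 u1 + hsSq 0 B1) * √(hsSq 1 u2 + hsSq 1 B2) *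
          √(hsSq s v1 + hsSq m v2) := by
        gcongr
        · linarith
        · exact le_add_of_nonneg_left (hsSq_nonneg 0 u1)
        · exact le_add_of_nonneg_left (hsSq_nonneg 1 u2)
        · exact le_add_of_nonneg_left (hsSq_nonneg s v1)

/-- Bound for the extended Hall operator on the product spaces:
‖H̃(φ,ψ)‖_{V_{s,m}'} ≤ c‖φ‖_𝓗‖ψ‖_𝓥 for φ = (u¹,B¹) ∈ 𝓗 = H × H,
ψ = (u²,B²) ∈ 𝓥 = V × V and test elements (v¹,v²) ∈ V_s × V_m, where
⟨H̃(φ,ψ),(v¹,v²)⟩ = h(B¹,B²,v²); stated on the dense class of smooth compactly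
supported divergence-free fields, with Fourier–Sobolev norms. -/
theorem hallOperator_product_bound (s m : ℝ) (hs : 0 ≤ s) (hm : 5 / 2 < m) :
    ∃ c : ℝ, 0 < c ∧ ∀ u1 B1 u2 B2 v1 v2 : VF,
      (ContDiff ℝ (⊤ : ℕ∞) u1 ∧ HasCompactSupport u1 ∧ divFree u1) →
      (ContDiff ℝ (⊤ : ℕ∞) B1 ∧ HasCompactSupport B1 ∧ divFree B1) →
      (ContDiff ℝ (⊤ : ℕ∞) u2 ∧ HasCompactSupport u2 ∧ divFree u2) →
      (ContDiff ℝ (⊤ : ℕ∞) B2 ∧ HasCompactSupport B2 ∧ divFree B2) →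
      (ContDiff ℝ (⊤ : ℕ∞) v1 ∧ HasCompactSupport v1 ∧ divFree v1) →
      (ContDiff ℝ (⊤ : ℕ∞) v2 ∧ HasCompactSupport v2 ∧ divFree v2) →
      |hallForm B1 B2 v2| ≤
        c * Real.sqrt (hsSq 0 u1 + hsSq 0 B1) * Real.sqrt (hsSq 1 u2 + hsSq 1 B2) *
          Real.sqrt (hsSq s v1 + hsSq m v2) :=
  hallOperator_product_bound_general s m hm
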